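/- For every strategy N ∈ 𝒩 there exists a strategy Ñ ∈ 𝒩 that realizes losses, in the sense that {S^j_i > S^j_t} ⊆ {Ñ_{i,t,j} = 0} a.s. for all i = 0,…,T−1, t = i+1,…,T, j = 1,…,d, with the property V^α(x,N) ≤ V^α(x,Ñ) almost surely for all initial capitals x ∈ ℝ. -/

import Mathlib

open MeasureTheory Filter Finset

noncomputable section
open scoped Classical

/-- Euclidean inner product on `Fin d → ℝ`. -/
def dotp {d : ℕ} (a b : Fin d → ℝ) : ℝ := ∑ j, a j * b j

/-- Euclidean norm on `Fin d → ℝ`. -/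
def eucNorm {d : ℕ} (a : Fin d → ℝ) : ℝ := Real.sqrt (∑ j, a j ^ 2)

/-- Accumulated realized gains and losses `G_t`, given the bank account history `eta`:
`G_t = ∑_{u=1}^t ( η_{u-1} r_u + ∑_{i=0}^{u-1} ⟨N_{i,u-1} - N_{i,u}, S_u - S_i⟩ )`. -/
def Gaux {d : ℕ} (S : ℕ → Fin d → ℝ) (r : ℕ → ℝ) (N : ℕ → ℕ → Fin d → ℝ)
    (eta : ℕ → ℝ) (t : ℕ) : ℝ :=
  ∑ u ∈ Finset.Icc 1 t,
    (eta (u - 1) * r u +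
      ∑ i ∈ Finset.range u, dotp (fun j => N i (u - 1) j - N i u j) (fun j => S u j - S i j))

/-- Limited-use-of-losses tax payments `Π_t = α · max_{0 ≤ u ≤ t} G_u`. -/
def Piaux {d : ℕ} (α : ℝ) (S : ℕ → Fin d → ℝ) (r : ℕ → ℝ) (N : ℕ → ℕ → Fin d → ℝ)
    (eta : ℕ → ℝ) (t : ℕ) : ℝ :=
  α * (Finset.range (t + 1)).sup' Finset.nonempty_range_add_one (fun u => Gaux S r N eta u)

/-- `etaHist α x S r N t` is the bank-account history after trading and taxes, up to time `t`:
for `s ≤ t` it gives `η_s`, and for `s > t` it gives `η_t`.  It is defined by the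
self-financing recursion `η_{-1} = x`,
`η_t - η_{t-1} = r_t η_{t-1} 1_{t ≥ 1} + ⟨∑_{i<t}(N_{i,t-1} - N_{i,t}) - N_{t,t}, S_t⟩
  - (Π_t - Π_{t-1}) 1_{t ≥ 1}`. -/
def etaHist {d : ℕ} (α x : ℝ) (S : ℕ → Fin d → ℝ) (r : ℕ → ℝ)
    (N : ℕ → ℕ → Fin d → ℝ) : ℕ → ℕ → ℝ :=
  Nat.rec (motive := fun _ => ℕ → ℝ)
    (fun _ => x - dotp (fun j => N 0 0 j) (fun j => S 0 j))
    (fun t e => fun s =>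
      if s ≤ t then e s
      else
        e t + r (t + 1) * e t
          + dotp
              (fun j => (∑ i ∈ Finset.range (t + 1), (N i t j - N i (t + 1) j))
                - N (t + 1) (t + 1) j)
              (fun j => S (t + 1) j)
          - (Piaux α S r N e (t + 1) - Piaux α S r N e t))

/-- A discrete-time market with horizon `T`, `d` risky assets, a filtration `F`,
adapted nonnegative-price processes are not required in general, and a nonnegative adapted
interest-rate process `r`. -/
structure Market (Ω : Type*) [m0 : MeasurableSpace Ω] (T d : ℕ) where
  P : Measure Ω
  hProb : IsProbabilityMeasure P
  F : ℕ → MeasurableSpace Ω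
  F_le : ∀ t, F t ≤ m0
  F_mono : Monotone F
  S : ℕ → Ω → Fin d → ℝ
  S_adapted : ∀ t, Measurable[F t] (S t)
  r : ℕ → Ω → ℝ
  r_nonneg : ∀ t ω, 0 ≤ r t ω
  r_adapted : ∀ t, Measurable[F t] (r t)

variable {Ω : Type*} [m0 : MeasurableSpace Ω] {T d : ℕ}

/-- A trading strategy: `N i t ω j` is the number of shares of asset `j` bought at time `i`
and still held after trading at time `t`.  It is `F t`-adapted, nonnegative, nonincreasing
in `t` (for `i ≤ t < T`), forced to liquidate at `T`, and zero before the purchase date. -/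
def Market.IsStrategy (M : Market Ω T d) (N : ℕ → ℕ → Ω → Fin d → ℝ) : Prop :=
  (∀ i t, Measurable[M.F t] (N i t)) ∧
  (∀ i t ω j, 0 ≤ N i t ω j) ∧
  (∀ i t, i ≤ t → t < T → ∀ ω j, N i (t + 1) ω j ≤ N i t ω j) ∧
  (∀ i ω j, N i T ω j = 0) ∧
  (∀ i t, t < i → ∀ ω j, N i t ω j = 0)

/-- After-tax terminal wealth `V^α(x,N) = η_T`. -/
def Market.V (M : Market Ω T d) (α x : ℝ) (N : ℕ → ℕ → Ω → Fin d → ℝ) (ω : Ω) : ℝ :=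
  etaHist α x (fun t => M.S t ω) (fun t => M.r t ω) (fun i t => N i t ω) T T

/-- The frictionless (tax-free) wealth process `V^0_t(x,N) = η_t + ⟨∑_{i≤t} N_{i,t}, S_t⟩`,
where `η` is the bank account for tax rate `0`. -/
def Market.V0proc (M : Market Ω T d) (x : ℝ) (N : ℕ → ℕ → Ω → Fin d → ℝ) (t : ℕ) (ω : Ω) : ℝ :=
  etaHist 0 x (fun u => M.S u ω) (fun u => M.r u ω) (fun i u => N i u ω) t t
    + dotp (fun j => ∑ i ∈ Finset.range (t + 1), N i t ω j) (fun j => M.S t ω j)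

/-- The no-arbitrage condition for tax rate `α`. -/
def Market.NA (M : Market Ω T d) (α : ℝ) : Prop :=
  ∀ N, M.IsStrategy N → (∀ᵐ ω ∂M.P, 0 ≤ M.V α 0 N ω) → ∀ᵐ ω ∂M.P, M.V α 0 N ω = 0

/-- The set `{V^α(x,N) : N ∈ 𝒩} - L^0(F_T; ℝ₊)` of attainable after-tax terminal wealths. -/
def Market.Vset (M : Market Ω T d) (α x : ℝ) : Set (Ω → ℝ) :=
  {f | ∃ N, M.IsStrategy N ∧
    ∃ g : Ω → ℝ, Measurable[M.F T] g ∧ (∀ ω, 0 ≤ g ω) ∧ f = fun ω => M.V α x N ω - g ω}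

/-- The frictionless wealth recursion
`V_t = (1+r_t) V_{t-1} + ⟨∑_{i<t} N_{i,t-1}, S_t - (1+r_t) S_{t-1}⟩`. -/
def wealth0 {d : ℕ} (S : ℕ → Fin d → ℝ) (r : ℕ → ℝ) (N : ℕ → ℕ → Fin d → ℝ) (x : ℝ) :
    ℕ → ℝ :=
  Nat.rec (motive := fun _ => ℝ) x (fun t W =>
    (1 + r (t + 1)) * W
      + dotp (fun j => ∑ i ∈ Finset.range (t + 1), N i t j)
          (fun j => S (t + 1) j - (1 + r (t + 1)) * S t j))

/-- Frictionless terminal wealth `V^0(x,N)`. -/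
def Market.V0 (M : Market Ω T d) (x : ℝ) (N : ℕ → ℕ → Ω → Fin d → ℝ) (ω : Ω) : ℝ :=
  wealth0 (fun t => M.S t ω) (fun t => M.r t ω) (fun i t => N i t ω) x T

/-- No-arbitrage for the frictionless model. -/
def Market.NA0 (M : Market Ω T d) : Prop :=
  ∀ N, M.IsStrategy N → (∀ᵐ ω ∂M.P, 0 ≤ M.V0 0 N ω) → ∀ᵐ ω ∂M.P, M.V0 0 N ω = 0

/-- The cone `ℛ_t` of reversible one-period strategies. -/
def Market.RevCone (M : Market Ω T d) (t : ℕ) : Set (Ω → Fin d → ℝ) :=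
  {β | Measurable[M.F t] β ∧ (∀ ω j, 0 ≤ β ω j) ∧
    ∀ᵐ ω ∂M.P, dotp (β ω) (fun j => M.S (t + 1) ω j - (1 + M.r (t + 1) ω) * M.S t ω j) = 0}

/-- `q` is the purely nonreversible part `q_t(β)` of `β`: it is `F_t`-measurable, nonnegative,
`β - q` is reversible, and `q` has minimal Euclidean norm among all such decompositions. -/
def Market.IsQ (M : Market Ω T d) (t : ℕ) (β q : Ω → Fin d → ℝ) : Prop :=
  Measurable[M.F t] q ∧ (∀ ω j, 0 ≤ q ω j) ∧
  (fun ω j => β ω j - q ω j) ∈ M.RevCone t ∧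
  ∀ q' : Ω → Fin d → ℝ, Measurable[M.F t] q' → (∀ ω j, 0 ≤ q' ω j) →
    (fun ω j => β ω j - q' ω j) ∈ M.RevCone t →
    ∀ᵐ ω ∂M.P, eucNorm (q ω) ≤ eucNorm (q' ω)

/-- `β` is purely nonreversible, i.e. `q_t(β) = β`. -/
def Market.PurelyNonRev (M : Market Ω T d) (t : ℕ) (β : Ω → Fin d → ℝ) : Prop :=
  M.IsQ t β β

/-- A reaction function: `R ω a i t` may depend on `ω` only through `F_t` and on the action
history `a` only through the actions up to time `t`; it is nonnegative, nonincreasing in `t`,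
vanishes at and after the horizon `T` and before the purchase date. -/
structure ReactionFun (M : Market Ω T d) where
  R : Ω → (ℕ → ℕ → Fin d → ℝ) → ℕ → ℕ → Fin d → ℝ
  nonneg : ∀ ω a i t j, 0 ≤ R ω a i t j
  adapted_actions : ∀ ω a a' i t, (∀ i' t', t' ≤ t → a i' t' = a' i' t') →
    R ω a i t = R ω a' i t
  meas : ∀ i t, Measurable[(M.F t).prod inferInstance]
    (fun p : Ω × (ℕ → ℕ → Fin d → ℝ) => R p.1 p.2 i t)
  antitone : ∀ ω a i t, i ≤ t → t + 2 ≤ T → ∀ j, R ω a i (t + 1) j ≤ R ω a i t j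
  upper : ∀ ω a i t, T ≤ t → ∀ j, R ω a i t j = 0
  lower : ∀ ω a i t, t < i → ∀ j, R ω a i t j = 0

/-- The strategy `R(N)` produced by a reaction function from a strategy `N`. -/
def ReactionFun.apply {M : Market Ω T d} (Rf : ReactionFun M)
    (N : ℕ → ℕ → Ω → Fin d → ℝ) : ℕ → ℕ → Ω → Fin d → ℝ :=
  fun i t ω => Rf.R ω (fun i' t' => N i' t' ω) i t

/-- `max_{i=0,…,T-1, j=1,…,d} N_{i,i,j}`. -/
def stratMax {Ω : Type*} {d : ℕ} (T : ℕ) (N : ℕ → ℕ → Ω → Fin d → ℝ) (ω : Ω) : ℝ :=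
  ⨆ i ∈ Finset.range T, ⨆ j : Fin d, N i i ω j

/-- A family of random variables is bounded in `L⁰` (bounded in probability). -/
def BoundedInL0 {Ω : Type*} [MeasurableSpace Ω] (P : Measure Ω) (𝒮 : Set (Ω → ℝ)) : Prop :=
  ∀ ε : ℝ, 0 < ε → ∃ C : ℝ, ∀ f ∈ 𝒮, P {ω | C < |f ω|} ≤ ENNReal.ofReal ε

/-- The "no unbounded non-substitutable investment with bounded risk" condition. -/
def Market.NUIBR (M : Market Ω T d) (α : ℝ) : Prop :=
  ∀ x : ℝ, ∃ Rf : ReactionFun M,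
    (∀ N, M.IsStrategy N → M.IsStrategy (Rf.apply N)) ∧
    (∀ N, M.IsStrategy N → ∀ᵐ ω ∂M.P, M.V α x N ω ≤ M.V α x (Rf.apply N) ω) ∧
    ∀ K : ℝ, 0 ≤ K →
      BoundedInL0 M.P (convexHull ℝ
        {f : Ω → ℝ | ∃ N, M.IsStrategy N ∧ (∀ᵐ ω ∂M.P, -K ≤ M.V α x N ω) ∧
          f = stratMax T (Rf.apply N)})

/-- A set of random variables is closed with respect to convergence in probability
(as a subset of `L⁰`, i.e. up to almost-sure equality). -/
def ClosedInProbability {Ω : Type*} [MeasurableSpace Ω] (P : Measure Ω)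
    (𝒮 : Set (Ω → ℝ)) : Prop :=
  ∀ (f : ℕ → Ω → ℝ) (g : Ω → ℝ), (∀ n, f n ∈ 𝒮) →
    TendstoInMeasure P f Filter.atTop g → ∃ g' ∈ 𝒮, g' =ᵐ[P] g


/-- Bank account process for an artificial linear tax rule `τ`:
taxes `Π^{(τ)}_t = α · G_{τ_t}` are paid according to the rule `τ` (with `τ 0 = 0`,
so that `Π^{(τ)}_0 = 0`).  `etaTau α x S r N τ t s` gives `η^{(τ)}_s` for `s ≤ t`. -/
def etaTau {d : ℕ} (α x : ℝ) (S : ℕ → Fin d → ℝ) (r : ℕ → ℝ)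
    (N : ℕ → ℕ → Fin d → ℝ) (τ : ℕ → ℕ) : ℕ → ℕ → ℝ :=
  Nat.rec (motive := fun _ => ℕ → ℝ)
    (fun _ => x - dotp (fun j => N 0 0 j) (fun j => S 0 j))
    (fun t e => fun s =>
      if s ≤ t then e s
      else
        e t + r (t + 1) * e t
          + dotp
              (fun j => (∑ i ∈ Finset.range (t + 1), (N i t j - N i (t + 1) j))
                - N (t + 1) (t + 1) j)
              (fun j => S (t + 1) j)
          - (α * Gaux S r N e (τ (t + 1)) - α * Gaux S r N e (τ t)))

variable {Ω : Type*} [m0 : MeasurableSpace Ω] {T d : ℕ}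

/-- An artificial linear tax rule: an adapted `{0,…,T}`-valued process `τ` with `τ_0 = 0`,
`τ` nondecreasing in `t`, `τ_t ≤ t`, and `τ_{τ_t} = τ_t` whenever `τ_t ≥ 1`. -/
def Market.IsTaxRule (M : Market Ω T d) (τ : ℕ → Ω → ℕ) : Prop :=
  (∀ ω, τ 0 ω = 0) ∧
  (∀ t, Measurable[M.F t] (τ t)) ∧
  (∀ t ω, τ t ω ≤ t) ∧
  (∀ t ω, τ t ω ≤ T) ∧
  (∀ s t, s ≤ t → ∀ ω, τ s ω ≤ τ t ω) ∧
  (∀ t ω, 1 ≤ τ t ω → τ (τ t ω) ω = τ t ω)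

/-- Terminal bank account `η^{(τ)}_T(N)` under the artificial tax rule `τ`. -/
def Market.etaTauT (M : Market Ω T d) (α x : ℝ) (N : ℕ → ℕ → Ω → Fin d → ℝ)
    (τ : ℕ → Ω → ℕ) (ω : Ω) : ℝ :=
  etaTau α x (fun t => M.S t ω) (fun t => M.r t ω) (fun i t => N i t ω) (fun t => τ t ω) T T

/-- A strategy realizes losses: it does not keep shares that trade below their purchase
price. -/
def Market.RealizesLosses (M : Market Ω T d) (N : ℕ → ℕ → Ω → Fin d → ℝ) : Prop :=
  ∀ i t j, i < t → t ≤ T → ∀ᵐ ω ∂M.P, M.S t ω j < M.S i ω j → N i t ω j = 0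

/-- The loss bound `L_t(N) = ((−x) ∨ 0 + ∑_{s<t} ⟨q_s(∑_{i≤s} N_{i,s}), S_s⟩)(1+r̄)^T`,
expressed through a given family `q s` of purely nonreversible parts. -/
def Lfun {Ω : Type*} {d : ℕ} (x rbar : ℝ) (T : ℕ) (S : ℕ → Ω → Fin d → ℝ)
    (q : ℕ → Ω → Fin d → ℝ) (t : ℕ) (ω : Ω) : ℝ :=
  (max (-x) 0 + ∑ s ∈ Finset.range t, dotp (q s ω) (fun j => S s ω j)) * (1 + rbar) ^ T

/-- A stopping time of the filtration `F`. -/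
def IsStoppingTimeFun {Ω : Type*} (F : ℕ → MeasurableSpace Ω) (τ : Ω → ℕ) : Prop :=
  ∀ t : ℕ, MeasurableSet[F t] {ω | τ ω ≤ t}

/-- The family of random variables over which the essential infimum defining `ε_t` is
taken. -/
def Market.epsFamily (M : Market Ω T d) (t : ℕ) : Set (Ω → ENNReal) :=
  {g | ∃ (ε : Ω → ℝ) (A : Set Ω) (N : ℕ → ℕ → Ω → Fin d → ℝ),
    Measurable[M.F t] ε ∧ (∀ ω, ε ω ∈ Set.Icc (0:ℝ) 1) ∧
    MeasurableSet[M.F t] A ∧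
    M.IsStrategy N ∧ (∀ i, i < t → ∀ ω j, N i i ω j = 0) ∧
    M.PurelyNonRev t (fun ω => N t t ω) ∧
    (∀ᵐ ω ∂M.P, eucNorm (N t t ω) = Set.indicator A (fun _ => (1:ℝ)) ω) ∧
    (∀ᵐ ω ∂M.P,
      (M.P[Set.indicator {ω' | M.V0 0 N ω' ≤ - ε ω'} (fun _ => (1:ℝ)) | M.F t]) ω ≤ ε ω) ∧
    g = fun ω => if ω ∈ A then ENNReal.ofReal (ε ω) else (⊤ : ENNReal)}

/-- `e` is the essential infimum of the family `𝒮` of `[0,∞]`-valued random variables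
(with respect to `P`, measurable with respect to `m'`). -/
def IsEssInfOfSet {Ω : Type*} [MeasurableSpace Ω] (m' : MeasurableSpace Ω) (P : Measure Ω)
    (𝒮 : Set (Ω → ENNReal)) (e : Ω → ENNReal) : Prop :=
  Measurable[m'] e ∧ (∀ g ∈ 𝒮, ∀ᵐ ω ∂P, e ω ≤ g ω) ∧
  ∀ e' : Ω → ENNReal, Measurable[m'] e' → (∀ g ∈ 𝒮, ∀ᵐ ω ∂P, e' ω ≤ g ω) →
    ∀ᵐ ω ∂P, e' ω ≤ e ω

/-- The positive part of an extended-real number, as an element of `[0,∞]`. -/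
def erealPos (y : EReal) : ENNReal := if y = ⊤ then ⊤ else ENNReal.ofReal y.toReal

/-- A utility function: `U = -∞` on the negative half-line, real-valued, nondecreasing and
concave on the positive half-line (with real restriction `u`), and continuous from the
right at `0`. -/
structure UtilityFun where
  U : ℝ → EReal
  u : ℝ → ℝ
  neg_bot : ∀ y : ℝ, y < 0 → U y = ⊥
  pos_real : ∀ y : ℝ, 0 < y → U y = (u y : EReal)
  mono : MonotoneOn u (Set.Ioi (0:ℝ))
  concave : ConcaveOn ℝ (Set.Ioi (0:ℝ)) u
  zero_lim : Filter.Tendsto U (nhdsWithin 0 (Set.Ioi (0:ℝ))) (nhds (U 0))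

/-- Expected utility `E[U(X)] = E[U⁺(X)] - E[U⁻(X)]`, with the convention that it equals
`-∞` whenever `E[U⁻(X)] = ∞`. -/
def expUtility {Ω : Type*} [MeasurableSpace Ω] (P : Measure Ω) (Uf : UtilityFun)
    (X : Ω → ℝ) : EReal :=
  if (∫⁻ ω, erealPos (-(Uf.U (X ω))) ∂P) = ⊤ then ⊥
  else ((∫⁻ ω, erealPos (Uf.U (X ω)) ∂P : ENNReal) : EReal)
    - ((∫⁻ ω, erealPos (-(Uf.U (X ω))) ∂P : ENNReal) : EReal)

/-- The value function `u^α(x) = sup_{N ∈ 𝒜^α(x)} E[U(V^α(x,N))]` of the utility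
maximization problem with taxes. -/
def Market.valueFn (M : Market Ω T d) (Uf : UtilityFun) (α x : ℝ) : EReal :=
  ⨆ N ∈ {N : ℕ → ℕ → Ω → Fin d → ℝ |
      M.IsStrategy N ∧ ∀ᵐ ω ∂M.P, 0 ≤ M.V α x N ω},
    expUtility M.P Uf (fun ω => M.V α x N ω)

/-- The value function `u^0(x)` of the frictionless utility maximization problem. -/
def Market.valueFn0 (M : Market Ω T d) (Uf : UtilityFun) (x : ℝ) : EReal :=
  ⨆ N ∈ {N : ℕ → ℕ → Ω → Fin d → ℝ |
      M.IsStrategy N ∧ ∀ᵐ ω ∂M.P, 0 ≤ M.V0 x N ω},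
    expUtility M.P Uf (fun ω => M.V0 x N ω)

/-- The set `{V^α(x,N) : N ∈ 𝒜^α(x)} - L^0(F_T; ℝ₊)`. -/
def Market.VsetNonneg (M : Market Ω T d) (α x : ℝ) : Set (Ω → ℝ) :=
  {f | ∃ N, M.IsStrategy N ∧ (∀ᵐ ω ∂M.P, 0 ≤ M.V α x N ω) ∧
    ∃ g : Ω → ℝ, Measurable[M.F T] g ∧ (∀ ω, 0 ≤ g ω) ∧ f = fun ω => M.V α x N ω - g ω}

/-- The set `{V^0(x,N) : N ∈ 𝒩} - L^0(F_T; ℝ₊)` for the frictionless model. -/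
def Market.V0set (M : Market Ω T d) (x : ℝ) : Set (Ω → ℝ) :=
  {f | ∃ N, M.IsStrategy N ∧
    ∃ g : Ω → ℝ, Measurable[M.F T] g ∧ (∀ ω, 0 ≤ g ω) ∧ f = fun ω => M.V0 x N ω - g ω}

/-- A measurable (set-valued) random set: preimages of open sets are measurable. -/
def MeasRandomSet {Ω : Type*} (m : MeasurableSpace Ω) {d : ℕ}
    (K : Ω → Set (Fin d → ℝ)) : Prop :=
  ∀ O : Set (Fin d → ℝ), IsOpen O → MeasurableSet[m] {ω | (K ω ∩ O).Nonempty}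

/-- The random set `A_t = {β ∈ 𝒫_t : 1 + r_{t+1} + ⟨β, S_{t+1} - (1+r_{t+1})S_t⟩ ≥ 0 a.s.}`. -/
def Market.AtSet (M : Market Ω T d) (t : ℕ) : Set (Ω → Fin d → ℝ) :=
  {β | M.PurelyNonRev t β ∧
    ∀ᵐ ω ∂M.P, 0 ≤ 1 + M.r (t + 1) ω
      + dotp (β ω) (fun j => M.S (t + 1) ω j - (1 + M.r (t + 1) ω) * M.S t ω j)}

/-!
Let `Ñ` be `N` with losses harvested: whenever an asset trades strictly below the purchase price
of a lot, the lot is sold and bought back at once. This changes neither the aggregate position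
nor, hence, the trading cash flows, and can only raise the unrealized gains, so the realized gains
`G̃` of `Ñ` exceed those of `N` by at most the interest `I_t` earned on the cash difference
`D = η̃ - η`. Taxes are `α` times the running maximum `M` of the realized gains, so
`D_{t+1} = (1 + r_{t+1}) D_t + α (M_{t+1} - M_t) - α (M̃_{t+1} - M̃_t)`, while `M̃ ≤ M + I`;
with `α ≤ 1` this propagates `D ≥ 0`.
-/

def runningMax (G : ℕ → ℝ) (t : ℕ) : ℝ :=
  (range (t + 1)).sup' nonempty_range_add_one G

lemma le_runningMax (G : ℕ → ℝ) {u t : ℕ} (h : u ≤ t) : G u ≤ runningMax G t :=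
  le_sup' G (mem_range.mpr (Nat.lt_succ_of_le h))

lemma runningMax_zero (G : ℕ → ℝ) : runningMax G 0 = G 0 := by
  simp [runningMax]

/- The invariant is `α K_t ≤ D_t` for the slack `K_t = max_{u≤t} G_u + I_t - max_{u≤t} G'_u`
with `I_t = ∑_{u<t} r_{u+1} D_u`; the slack is nonnegative as long as `D` has been. -/
theorem nonneg_of_runningMax_recursion {α : ℝ} (hα0 : 0 ≤ α) (hα1 : α ≤ 1) {r G G' D : ℕ → ℝ}
    (hr : ∀ t, 0 ≤ r t) (hG0 : G 0 ≤ G' 0)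
    (hG : ∀ t, G' t ≤ G t + ∑ u ∈ range t, r (u + 1) * D u) (hD0 : D 0 = 0)
    (hD : ∀ t, D (t + 1) = (1 + r (t + 1)) * D t
      + α * (runningMax G (t + 1) - runningMax G t)
      - α * (runningMax G' (t + 1) - runningMax G' t)) (t : ℕ) :
    0 ≤ D t := by
  set I : ℕ → ℝ := fun t => ∑ u ∈ range t, r (u + 1) * D u with hI
  have slack_nonneg : ∀ t, (∀ u < t, 0 ≤ D u) → runningMax G' t ≤ runningMax G t + I t := by
    intro t hDt
    refine sup'_le _ _ fun u hu => ?_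
    have hut : u ≤ t := Nat.lt_succ_iff.mp (mem_range.mp hu)
    have hIut : I u ≤ I t := sum_le_sum_of_subset_of_nonneg (range_subset_range.mpr hut)
      fun v hv _ => mul_nonneg (hr _) (hDt v (mem_range.mp hv))
    linarith [hG u, le_runningMax G hut]
  have invariant : ∀ t, (∀ u ≤ t, 0 ≤ D u) ∧
      α * (runningMax G t + I t - runningMax G' t) ≤ D t := by
    intro t
    induction t with
    | zero =>
      refine ⟨fun u hu => by rw [Nat.le_zero.mp hu, hD0], ?_⟩
      simp only [runningMax_zero, hI, range_zero, sum_empty, add_zero, hD0]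
      nlinarith
    | succ t ih =>
      obtain ⟨hDle, hslack⟩ := ih
      have hIsucc : I (t + 1) = I t + r (t + 1) * D t := sum_range_succ _ _
      have hstep : α * (runningMax G (t + 1) + I (t + 1) - runningMax G' (t + 1)) ≤ D (t + 1) := by
        rw [hD t, hIsucc]
        nlinarith [mul_nonneg (sub_nonneg.2 hα1) (mul_nonneg (hr (t + 1)) (hDle t le_rfl))]
      refine ⟨fun u hu => ?_, hstep⟩
      rcases Nat.lt_or_eq_of_le hu with hu | rfl
      · exact hDle u (Nat.lt_succ_iff.mp hu)
      · have hK := slack_nonneg (t + 1) fun u hu => hDle u (Nat.lt_succ_iff.mp hu)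
        nlinarith [mul_nonneg hα0 (sub_nonneg.2 hK)]
  exact (invariant t).1 t le_rfl

section Pathwise

variable (α x : ℝ) (S : ℕ → Fin d → ℝ) (r : ℕ → ℝ) (N : ℕ → ℕ → Fin d → ℝ)

def bankAccount (t : ℕ) : ℝ := etaHist α x S r N t t

def gains (t : ℕ) : ℝ := Gaux S r N (bankAccount α x S r N) t

def totalPosition (N : ℕ → ℕ → Fin d → ℝ) (t : ℕ) (j : Fin d) : ℝ :=
  ∑ i ∈ range (t + 1), N i t j

def unrealizedGains (S : ℕ → Fin d → ℝ) (N : ℕ → ℕ → Fin d → ℝ) (t : ℕ) : ℝ :=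
  ∑ i ∈ range (t + 1), dotp (N i t) (fun j => S t j - S i j)

lemma etaHist_succ (t s : ℕ) :
    etaHist α x S r N (t + 1) s =
      if s ≤ t then etaHist α x S r N t s
      else etaHist α x S r N t t + r (t + 1) * etaHist α x S r N t t
        + dotp (fun j => (∑ i ∈ range (t + 1), (N i t j - N i (t + 1) j)) - N (t + 1) (t + 1) j)
            (S (t + 1))
        - (Piaux α S r N (etaHist α x S r N t) (t + 1) - Piaux α S r N (etaHist α x S r N t) t) :=
  rfl

lemma etaHist_of_le {s t : ℕ} (h : s ≤ t) : etaHist α x S r N t s = bankAccount α x S r N s := by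
  induction t with
  | zero => rw [Nat.le_zero.mp h]; rfl
  | succ t ih =>
    rcases Nat.lt_or_eq_of_le h with h | rfl
    · rw [etaHist_succ, if_pos (Nat.lt_succ_iff.mp h), ih (Nat.lt_succ_iff.mp h)]
    · rfl

lemma Gaux_congr {e e' : ℕ → ℝ} {t : ℕ} (h : ∀ v < t, e v = e' v) :
    Gaux S r N e t = Gaux S r N e' t :=
  sum_congr rfl fun u hu => by
    rw [h (u - 1) (by simp only [mem_Icc] at hu; omega)]

lemma Gaux_succ (e : ℕ → ℝ) (t : ℕ) :
    Gaux S r N e (t + 1) = Gaux S r N e t + e t * r (t + 1)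
      + ∑ i ∈ range (t + 1), dotp (fun j => N i t j - N i (t + 1) j)
          (fun j => S (t + 1) j - S i j) := by
  rw [Gaux, sum_Icc_succ_top (Nat.le_add_left 1 t), Nat.add_sub_cancel, ← Gaux, add_assoc]

lemma bankAccount_zero : bankAccount α x S r N 0 = x - dotp (totalPosition N 0) (S 0) := by
  rw [show totalPosition N 0 = N 0 0 from funext fun j => by simp [totalPosition]]
  rfl

lemma Gaux_zero (e : ℕ → ℝ) : Gaux S r N e 0 = 0 := by
  simp [Gaux]

lemma bankAccount_succ (t : ℕ) :
    bankAccount α x S r N (t + 1) = (1 + r (t + 1)) * bankAccount α x S r N t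
      + dotp (fun j => totalPosition N t j - totalPosition N (t + 1) j) (S (t + 1))
      - α * (runningMax (gains α x S r N) (t + 1) - runningMax (gains α x S r N) t) := by
  have hPi : ∀ u ≤ t + 1, Piaux α S r N (etaHist α x S r N t) u
      = α * runningMax (gains α x S r N) u := fun u hu =>
    congrArg (α * ·) <| sup'_congr _ rfl fun v hv => Gaux_congr S r N fun w hw =>
      etaHist_of_le α x S r N (by simp only [mem_range] at hv; omega)
  have hflow : (fun j => (∑ i ∈ range (t + 1), (N i t j - N i (t + 1) j)) - N (t + 1) (t + 1) j)
      = fun j => totalPosition N t j - totalPosition N (t + 1) j := by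
    funext j
    rw [totalPosition, totalPosition, sum_range_succ _ (t + 1), sum_sub_distrib]
    ring
  rw [bankAccount, etaHist_succ, if_neg (Nat.not_succ_le_self t), hPi _ le_rfl,
    hPi _ (Nat.le_succ t), hflow, ← bankAccount]
  ring

lemma Gaux_add_unrealizedGains (e : ℕ → ℝ) (t : ℕ) :
    Gaux S r N e t + unrealizedGains S N t
      = ∑ u ∈ range t,
          (e u * r (u + 1) + dotp (totalPosition N u) (fun j => S (u + 1) j - S u j)) := by
  induction t with
  | zero => simp [Gaux, unrealizedGains, dotp]
  | succ t ih =>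
    have hsplit : (∑ i ∈ range (t + 1), dotp (fun j => N i t j - N i (t + 1) j)
          (fun j => S (t + 1) j - S i j)) + unrealizedGains S N (t + 1)
        = unrealizedGains S N t + dotp (totalPosition N t) (fun j => S (t + 1) j - S t j) := by
      rw [unrealizedGains, unrealizedGains, sum_range_succ _ (t + 1)]
      simp only [dotp, totalPosition, sum_mul, sub_self, mul_zero, sum_const_zero, add_zero]
      rw [sum_comm (s := univ)]
      simp only [← sum_add_distrib]
      exact sum_congr rfl fun i _ => sum_congr rfl fun j _ => by ring
    rw [Gaux_succ, sum_range_succ (fun u => e u * r (u + 1) + _), ← ih]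
    linarith

variable {α x S r}

lemma gains_le_of_unrealizedGains_le {N N' : ℕ → ℕ → Fin d → ℝ}
    (hpos : ∀ t, totalPosition N' t = totalPosition N t)
    (hU : ∀ t, unrealizedGains S N t ≤ unrealizedGains S N' t) (t : ℕ) :
    gains α x S r N' t ≤ gains α x S r N t
      + ∑ u ∈ range t, r (u + 1) * (bankAccount α x S r N' u - bankAccount α x S r N u) := by
  have h := Gaux_add_unrealizedGains S r N (bankAccount α x S r N) t
  have h' := Gaux_add_unrealizedGains S r N' (bankAccount α x S r N') t
  simp only [hpos] at h'
  have hinterest : ∑ u ∈ range t, r (u + 1) * (bankAccount α x S r N' u - bankAccount α x S r N u)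
      = (∑ u ∈ range t, (bankAccount α x S r N' u * r (u + 1)
          + dotp (totalPosition N u) (fun j => S (u + 1) j - S u j)))
        - ∑ u ∈ range t, (bankAccount α x S r N u * r (u + 1)
          + dotp (totalPosition N u) (fun j => S (u + 1) j - S u j)) := by
    rw [← sum_sub_distrib]
    exact sum_congr rfl fun u _ => by ring
  rw [gains, gains]
  linarith [hU t]

theorem bankAccount_le_of_unrealizedGains_le (hα0 : 0 ≤ α) (hα1 : α ≤ 1) (hr : ∀ t, 0 ≤ r t)
    {N N' : ℕ → ℕ → Fin d → ℝ} (hpos : ∀ t, totalPosition N' t = totalPosition N t)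
    (hU : ∀ t, unrealizedGains S N t ≤ unrealizedGains S N' t) (t : ℕ) :
    bankAccount α x S r N t ≤ bankAccount α x S r N' t := by
  refine sub_nonneg.mp <| nonneg_of_runningMax_recursion hα0 hα1 hr ?_
    (gains_le_of_unrealizedGains_le hpos hU) ?_ (fun t => ?_) t
  · rw [gains, gains, Gaux_zero, Gaux_zero]
  · rw [bankAccount_zero, bankAccount_zero, hpos, sub_self]
  · rw [bankAccount_succ, bankAccount_succ, hpos, hpos]
    ring

end Pathwise

section BasisTime

variable (p : ℕ → ℝ)

-- For `i ≤ t`: the first time in `[i, t]` at which `p` attains its minimum over `[i, t]`.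
def basisTime (i : ℕ) : ℕ → ℕ
  | 0 => i
  | t + 1 => if t + 1 ≤ i then i else if p (t + 1) < p (basisTime i t) then t + 1 else basisTime i t

variable {p}

lemma basisTime_of_le {i t : ℕ} (h : t ≤ i) : basisTime p i t = i := by
  cases t with
  | zero => rfl
  | succ t => exact if_pos h

lemma basisTime_le {i t : ℕ} (h : i ≤ t) : basisTime p i t ≤ t := by
  induction t with
  | zero => exact h
  | succ t ih =>
    rcases Nat.lt_or_eq_of_le h with h | rfl
    · rw [basisTime, if_neg (by omega)]
      split_ifs
      · exact le_rfl
      · exact (ih (Nat.lt_succ_iff.mp h)).trans (Nat.le_succ t)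
    · exact (basisTime_of_le le_rfl).le

lemma price_basisTime_le (i t : ℕ) : p (basisTime p i t) ≤ p i := by
  induction t with
  | zero => exact le_rfl
  | succ t ih =>
    rw [basisTime]
    split_ifs with h1 h2
    · exact le_rfl
    · exact h2.le.trans ih
    · exact ih

lemma basisTime_eq_of_succ_eq {i t k : ℕ} (h : basisTime p i (t + 1) = k) (hk : k ≤ t) :
    basisTime p i t = k := by
  rw [basisTime] at h
  split_ifs at h with h1 h2
  · exact h ▸ basisTime_of_le (by omega)
  · omega
  · exact h

lemma price_le_of_basisTime_eq {i t k : ℕ} (h : basisTime p i t = k) (hk : k < t) :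
    p k ≤ p t := by
  cases t with
  | zero => omega
  | succ t =>
    rw [basisTime] at h
    split_ifs at h with h1 h2
    · omega
    · omega
    · rw [← h]
      exact not_lt.mp h2

end BasisTime

section HarvestLosses

variable (S : ℕ → Fin d → ℝ) (N : ℕ → ℕ → Fin d → ℝ)

-- Tax-loss harvesting: a share is sold and bought back whenever its price falls strictly below
-- its current purchase price, so a share bought at `i` is held at `t` in the lot `basisTime i t`.
def harvestLosses (k t : ℕ) (j : Fin d) : ℝ :=
  ∑ i ∈ range (t + 1) with basisTime (fun u => S u j) i t = k, N i t j

lemma basisTime_mem_range {i t : ℕ} (j : Fin d) (hi : i ∈ range (t + 1)) :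
    basisTime (fun u => S u j) i t ∈ range (t + 1) :=
  mem_range.mpr (Nat.lt_succ_of_le (basisTime_le (Nat.lt_succ_iff.mp (mem_range.mp hi))))

lemma totalPosition_harvestLosses (t : ℕ) :
    totalPosition (harvestLosses S N) t = totalPosition N t :=
  funext fun j => sum_fiberwise_of_maps_to (fun _ hi => basisTime_mem_range S j hi) _

lemma unrealizedGains_le_harvestLosses (hN : ∀ i t j, 0 ≤ N i t j) (t : ℕ) :
    unrealizedGains S N t ≤ unrealizedGains S (harvestLosses S N) t := by
  have hregroup : ∀ j, ∑ k ∈ range (t + 1), harvestLosses S N k t j * (S t j - S k j)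
      = ∑ i ∈ range (t + 1), N i t j * (S t j - S (basisTime (fun u => S u j) i t) j) := by
    intro j
    refine (sum_congr rfl fun k _ => ?_).trans
      (sum_fiberwise_of_maps_to (fun _ hi => basisTime_mem_range S j hi) _)
    rw [harvestLosses, sum_mul]
    exact sum_congr rfl fun i hi => by rw [(mem_filter.mp hi).2]
  simp only [unrealizedGains, dotp]
  rw [sum_comm, sum_comm (s := range (t + 1))]
  refine sum_le_sum fun j _ => ?_
  rw [hregroup]
  exact sum_le_sum fun i _ => mul_le_mul_of_nonneg_left
    (sub_le_sub_left (price_basisTime_le (p := fun u => S u j) i t) _) (hN i t j)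

variable {S N}

lemma harvestLosses_nonneg (hN : ∀ i t j, 0 ≤ N i t j) (k t : ℕ) (j : Fin d) :
    0 ≤ harvestLosses S N k t j :=
  sum_nonneg fun i _ => hN i t j

lemma harvestLosses_succ_le (hN : ∀ i t j, 0 ≤ N i t j) {k t : ℕ} {j : Fin d}
    (hanti : ∀ i ≤ t, N i (t + 1) j ≤ N i t j) (hk : k ≤ t) :
    harvestLosses S N k (t + 1) j ≤ harvestLosses S N k t j := by
  have hsub : {i ∈ range (t + 2) | basisTime (fun u => S u j) i (t + 1) = k}
      ⊆ {i ∈ range (t + 1) | basisTime (fun u => S u j) i t = k} := by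
    intro i hi
    obtain ⟨hi, hik⟩ := mem_filter.mp hi
    have hit : i ≤ t := by
      by_contra h
      rw [basisTime_of_le (by simp only [mem_range] at hi; omega)] at hik
      omega
    exact mem_filter.mpr ⟨mem_range.mpr (Nat.lt_succ_of_le hit), basisTime_eq_of_succ_eq hik hk⟩
  calc harvestLosses S N k (t + 1) j
      ≤ ∑ i ∈ range (t + 2) with basisTime (fun u => S u j) i (t + 1) = k, N i t j :=
        sum_le_sum fun i hi =>
          hanti i (Nat.lt_succ_iff.mp (mem_range.mp (mem_filter.mp (hsub hi)).1))
    _ ≤ harvestLosses S N k t j := sum_le_sum_of_subset_of_nonneg hsub fun i _ _ => hN i t j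

lemma harvestLosses_of_lt {k t : ℕ} (h : t < k) (j : Fin d) : harvestLosses S N k t j = 0 :=
  sum_eq_zero fun _ hi => by
    have := basisTime_mem_range S j (mem_filter.mp hi).1
    rw [(mem_filter.mp hi).2, mem_range] at this
    omega

lemma harvestLosses_of_price_lt {k t : ℕ} {j : Fin d} (hkt : k < t) (hS : S t j < S k j) :
    harvestLosses S N k t j = 0 :=
  sum_eq_zero fun _ hi =>
    absurd hS (not_lt.mpr (price_le_of_basisTime_eq (mem_filter.mp hi).2 hkt))

lemma harvestLosses_of_forall_eq_zero {t : ℕ} {j : Fin d} (h : ∀ i, N i t j = 0) (k : ℕ) :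
    harvestLosses S N k t j = 0 :=
  sum_eq_zero fun i _ => h i

end HarvestLosses

lemma measurable_eval_of_le {Ω' : Type*} [m : MeasurableSpace Ω'] {X : ℕ → Ω' → ℝ} {τ : Ω' → ℕ}
    {t : ℕ} (hX : ∀ k ≤ t, Measurable (X k)) (hτ : Measurable τ) (hτt : ∀ ω, τ ω ≤ t) :
    Measurable fun ω => X (τ ω) ω := by
  have hclip : (fun ω => X (τ ω) ω) = (fun q : Ω' × ℕ => X (min q.2 t) q.1) ∘ fun ω => (ω, τ ω) :=
    funext fun ω => by simp [min_eq_left (hτt ω)]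
  rw [hclip]
  exact (measurable_from_prod_countable_left fun k => hX _ (min_le_right k t)).comp
    (measurable_id.prodMk hτ)

namespace Market

variable (M : Market Ω T d)

lemma measurable_basisTime (i : ℕ) (j : Fin d) (t : ℕ) :
    Measurable[M.F t] fun ω => basisTime (fun u => M.S u ω j) i t := by
  induction t with
  | zero => exact measurable_const
  | succ t ih =>
    have hSj : ∀ k ≤ t + 1, Measurable[M.F (t + 1)] fun ω => M.S k ω j := fun k hk =>
      ((measurable_pi_apply j).comp (M.S_adapted k)).mono (M.F_mono hk) le_rfl
    have hb : Measurable[M.F (t + 1)] fun ω => basisTime (fun u => M.S u ω j) i t :=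
      ih.mono (M.F_mono (Nat.le_succ t)) le_rfl
    by_cases hi : t + 1 ≤ i
    · simp only [basisTime, if_pos hi]
      exact measurable_const
    · simp only [basisTime, if_neg hi]
      refine Measurable.ite (measurableSet_lt (hSj _ le_rfl) ?_) measurable_const hb
      exact measurable_eval_of_le (m := M.F (t + 1)) (X := fun k ω => M.S k ω j) hSj hb
        fun ω => (basisTime_le (by omega)).trans (Nat.le_succ t)

def harvestLosses (N : ℕ → ℕ → Ω → Fin d → ℝ) : ℕ → ℕ → Ω → Fin d → ℝ :=
  fun k t ω => _root_.harvestLosses (fun u => M.S u ω) (fun i t => N i t ω) k t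

variable {M}

lemma isStrategy_harvestLosses {N : ℕ → ℕ → Ω → Fin d → ℝ} (hN : M.IsStrategy N) :
    M.IsStrategy (M.harvestLosses N) := by
  obtain ⟨hmeas, hpos, hanti, hliq, -⟩ := hN
  refine ⟨fun k t => ?_, fun k t ω j => harvestLosses_nonneg (fun i t j => hpos i t ω j) k t j,
    fun k t hkt htT ω j => harvestLosses_succ_le (fun i t j => hpos i t ω j)
      (fun i hi => hanti i t hi htT ω j) hkt,
    fun k ω j => harvestLosses_of_forall_eq_zero (fun i => hliq i ω j) k,
    fun k t htk ω j => harvestLosses_of_lt htk j⟩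
  refine @measurable_pi_lambda Ω (Fin d) (fun _ => ℝ) (M.F t) _ _ fun j => ?_
  simp only [Market.harvestLosses, _root_.harvestLosses, sum_filter]
  exact Finset.measurable_sum _ fun i _ => Measurable.ite
    (M.measurable_basisTime i j t (measurableSet_singleton k))
    ((measurable_pi_apply j).comp (hmeas i t)) measurable_const

lemma realizesLosses_harvestLosses (N : ℕ → ℕ → Ω → Fin d → ℝ) :
    M.RealizesLosses (M.harvestLosses N) :=
  fun _ _ _ hkt _ => ae_of_all _ fun ω =>
    harvestLosses_of_price_lt (S := fun u => M.S u ω) (N := fun i t => N i t ω) hkt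

lemma V_le_V_harvestLosses {α : ℝ} (hα0 : 0 ≤ α) (hα1 : α ≤ 1) {N : ℕ → ℕ → Ω → Fin d → ℝ}
    (hN : ∀ i t ω j, 0 ≤ N i t ω j) (x : ℝ) (ω : Ω) :
    M.V α x N ω ≤ M.V α x (M.harvestLosses N) ω :=
  bankAccount_le_of_unrealizedGains_le hα0 hα1 (fun t => M.r_nonneg t ω)
    (totalPosition_harvestLosses _ _)
    (unrealizedGains_le_harvestLosses _ _ fun i t j => hN i t ω j) T

end Market

/-- For every strategy `N` there is a strategy `Ñ` that realizes losses
(holds no shares trading below their purchase price) and is at least as good: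
`V^α(x,N) ≤ V^α(x,Ñ)` a.s. for every initial capital `x`. -/
theorem exists_realizesLosses_dominating
    (M : Market Ω T d) (α : ℝ) (hα0 : 0 ≤ α) (hα1 : α < 1)
    (N : ℕ → ℕ → Ω → Fin d → ℝ) (hN : M.IsStrategy N) :
    ∃ Ntil : ℕ → ℕ → Ω → Fin d → ℝ, M.IsStrategy Ntil ∧ M.RealizesLosses Ntil ∧
      ∀ x : ℝ, ∀ᵐ ω ∂M.P, M.V α x N ω ≤ M.V α x Ntil ω :=
  ⟨M.harvestLosses N, Market.isStrategy_harvestLosses hN, Market.realizesLosses_harvestLosses N,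
    fun x => ae_of_all _ (Market.V_le_V_harvestLosses hα0 hα1.le hN.2.1 x)⟩

end
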